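/- For any b ∈ (0,1), any real x, and any η ≤ 1/(2|x|): sup over a ∈ [0,1] of (|a - b|·x - (1/η)·D_log(a, b)) ≤ η·b²·x², where D_log is the Bregman divergence of the function -log. -/

import Mathlib

/-!
With `c = a / b` and `v = b η x`, the divergence is `c - 1 - log c`, and after multiplying by `η`
the bound reduces to `±(c - 1) v ≤ c - 1 - log c + v²`, i.e. to
`log c ≤ c (1 - v) - 1 + v + v²` for `|v| ≤ 1/2`. This is `log (c (1 - v)) ≤ c (1 - v) - 1`
combined with `log (1 - v) ≥ -v - v²`.
-/

open Real

noncomputable def bregmanNegLog (a b : ℝ) : ℝ := -log a + log b + (a - b) / b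

lemma sub_sq_le_log_one_add {w : ℝ} (hw : -1/2 ≤ w) : w - w ^ 2 ≤ log (1 + w) := by
  rcases le_total 0 w with hw0 | hw0
  · have hinv : (1 + w)⁻¹ ≤ 1 - w + w ^ 2 := by
      rw [inv_le_iff_one_le_mul₀ (by positivity)]
      nlinarith [pow_nonneg hw0 3]
    linarith [one_sub_inv_le_log_of_pos (show 0 < 1 + w by linarith)]
  · have hexp : 1 + (w ^ 2 - w) + (w ^ 2 - w) ^ 2 / 2 ≤ exp (w ^ 2 - w) :=
      quadratic_le_exp_of_nonneg (by nlinarith)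
    rw [le_log_iff_exp_le (by linarith), show w - w ^ 2 = -(w ^ 2 - w) by ring, exp_neg,
      inv_le_iff_one_le_mul₀' (exp_pos _)]
    nlinarith [mul_le_mul_of_nonneg_left hexp (show 0 ≤ 1 + w by linarith),
      mul_nonneg (mul_nonneg (sq_nonneg w) (neg_nonneg.2 hw0)) (show 0 ≤ 1 + 2 * w by linarith)]

lemma log_le_mul_one_sub_add_sq {c v : ℝ} (hc : 0 < c) (hv : v ≤ 1/2) :
    log c ≤ c * (1 - v) - 1 + v + v ^ 2 := by
  have hmul : log c + log (1 - v) ≤ c * (1 - v) - 1 := by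
    rw [← log_mul hc.ne' (by linarith)]
    exact log_le_sub_one_of_pos (mul_pos hc (by linarith))
  have hlog : -v - v ^ 2 ≤ log (1 - v) := by
    have := sub_sq_le_log_one_add (show -1/2 ≤ -v by linarith)
    rwa [neg_sq, ← sub_eq_add_neg] at this
  linarith

lemma sub_mul_le_bregmanNegLog_add_sq {a b s : ℝ} (ha : 0 < a) (hb : 0 < b) (hs : b * s ≤ 1/2) :
    (a - b) * s ≤ bregmanNegLog a b + (b * s) ^ 2 := by
  have h := log_le_mul_one_sub_add_sq (div_pos ha hb) hs
  rw [log_div ha.ne' hb.ne'] at h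
  have hexpand : a / b * (1 - b * s) = a / b - a * s := by field_simp
  have hquot : (a - b) / b = a / b - 1 := by field_simp
  rw [bregmanNegLog, hquot]
  linarith

lemma abs_sub_mul_abs_le_bregmanNegLog_add_sq {a b s : ℝ} (ha : 0 < a) (hb : 0 < b)
    (hs : b * |s| ≤ 1/2) :
    |a - b| * |s| ≤ bregmanNegLog a b + (b * s) ^ 2 := by
  rw [← abs_mul]
  refine abs_le'.2 ⟨?_, ?_⟩
  · refine sub_mul_le_bregmanNegLog_add_sq ha hb (le_trans ?_ hs)
    exact mul_le_mul_of_nonneg_left (le_abs_self s) hb.le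
  · have h := sub_mul_le_bregmanNegLog_add_sq (s := -s) ha hb
      (le_trans (mul_le_mul_of_nonneg_left (neg_le_abs s) hb.le) hs)
    rwa [mul_neg, mul_neg, neg_sq] at h

/-- One-dimensional log-barrier stability bound. -/
theorem logdet_scalar_stability (b x η : ℝ) (hb0 : 0 < b) (hb1 : b < 1)
    (hη : 0 < η) (hηx : η * (2 * |x|) ≤ 1)
    (a : ℝ) (ha : a ∈ Set.Ioc (0:ℝ) 1) :
    |a - b| * x - (1/η) * (-Real.log a + Real.log b + (a - b) / b)
    ≤ η * b^2 * x^2 := by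
  have hstep : b * |η * x| ≤ 1/2 := by
    rw [abs_mul, abs_of_pos hη]
    nlinarith [abs_nonneg x]
  have hbound := abs_sub_mul_abs_le_bregmanNegLog_add_sq ha.1 hb0 hstep
  have habs : |a - b| * (η * x) ≤ |a - b| * |η * x| :=
    mul_le_mul_of_nonneg_left (le_abs_self _) (abs_nonneg _)
  change |a - b| * x - 1 / η * bregmanNegLog a b ≤ _
  rw [← mul_le_mul_iff_of_pos_left hη, mul_sub, ← mul_assoc η (1 / η),
    mul_one_div_cancel hη.ne', one_mul]
  linarith
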